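/- There exists a constant c₁ > 0 such that for every positive integer δ and all sufficiently large n, for all sufficiently large K (depending on n and δ): the number of n-element subsets S of the K×K grid whose minimum triangle area A(S) is less than c₁/(2^δ · n³) is at most 2^{−δ} · binom(K², n). -/

import Mathlib

def grid (K : ℕ) : Finset (ℤ × ℤ) :=
  (Finset.range K ×ˢ Finset.range K).image fun p => ((p.1 : ℤ), (p.2 : ℤ))

noncomputable def scale (K : ℕ) (p : ℤ × ℤ) : ℝ × ℝ :=
  ((p.1 : ℝ) / ((K : ℝ) - 1), (p.2 : ℝ) / ((K : ℝ) - 1))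

noncomputable def triArea (P Q R : ℝ × ℝ) : ℝ :=
  |(Q.1 - P.1) * (R.2 - P.2) - (Q.2 - P.2) * (R.1 - P.1)| / 2

noncomputable def gridMinArea (K : ℕ) (S : Finset (ℤ × ℤ)) : ℝ :=
  sInf {a | ∃ P ∈ S, ∃ Q ∈ S, ∃ R ∈ S, P ≠ Q ∧ P ≠ R ∧ Q ≠ R ∧
    a = triArea (scale K P) (scale K Q) (scale K R)}

/-!
If the minimum area is below `c/(2^δ n³)`, then `S` contains distinct grid points `P, Q, R` whose
integer cross product satisfies `|(Q - P) × (R - P)| ≤ M ≈ K² / (256 · 2^δ n³)`. For fixed `P` and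
`Q ≠ P` at sup-distance `t`, such `R` lie in a strip of width `≈ 2M/t`, so there are at most
`(2M/t + 1) K` of them; as at most `8t` points `Q` lie at sup-distance `t` from `P`, there are
`O(K⁴ (M + K))` such ordered triples. Each triple lies in `C(K² - 3, n - 3)` of the `n`-subsets, and
`C(K² - 3, n - 3) / C(K², n) = n(n-1)(n-2) / (K²(K²-1)(K²-2)) ≤ 8 n³ / K⁶`, which beats the number
of triples by the factor `2^δ` once `K ≥ 128 · 2^δ n³`.
-/

open Finset

def cross (u w : ℤ × ℤ) : ℤ := u.1 * w.2 - u.2 * w.1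

def supNorm (u : ℤ × ℤ) : ℕ := max u.1.natAbs u.2.natAbs

lemma cross_swap (u w : ℤ × ℤ) : cross u.swap w.swap = -cross u w := by
  simp only [cross, Prod.fst_swap, Prod.snd_swap]
  ring

lemma supNorm_swap (u : ℤ × ℤ) : supNorm u.swap = supNorm u := max_comm _ _

lemma triArea_scale (K : ℕ) (P Q R : ℤ × ℤ) :
    triArea (scale K P) (scale K Q) (scale K R) =
      |(cross (Q - P) (R - P) : ℝ)| / (2 * ((K : ℝ) - 1) ^ 2) := by
  simp only [triArea, scale, cross, Prod.fst_sub, Prod.snd_sub, Int.cast_sub, Int.cast_mul,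
    div_sub_div_same, div_mul_div_comm]
  rw [abs_div, abs_mul_self, div_div]
  ring

lemma grid_eq_Ico (K : ℕ) : grid K = Ico 0 (K : ℤ) ×ˢ Ico 0 (K : ℤ) := by
  ext ⟨a, b⟩
  simp only [grid, mem_image, mem_product, mem_range, mem_Ico, Prod.mk.injEq, Prod.exists]
  constructor
  · rintro ⟨x, y, ⟨hx, hy⟩, rfl, rfl⟩
    omega
  · rintro ⟨⟨ha, ha'⟩, hb, hb'⟩
    exact ⟨a.toNat, b.toNat, by omega, by omega, by omega⟩

lemma card_grid (K : ℕ) : #(grid K) = K ^ 2 := by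
  rw [grid_eq_Ico, card_product, Int.card_Ico, sub_zero, Int.toNat_natCast, sq]

lemma swap_mem_grid {K : ℕ} {P : ℤ × ℤ} (hP : P ∈ grid K) : P.swap ∈ grid K := by
  rw [grid_eq_Ico, mem_product] at hP ⊢
  exact hP.symm

lemma supNorm_sub_lt {K : ℕ} {P Q : ℤ × ℤ} (hP : P ∈ grid K) (hQ : Q ∈ grid K) :
    supNorm (Q - P) < K := by
  rw [grid_eq_Ico, mem_product, mem_Ico, mem_Ico] at hP hQ
  simp only [supNorm, Prod.fst_sub, Prod.snd_sub, max_lt_iff]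
  omega

lemma card_le_of_natAbs_sub_le {s : Finset ℤ} {d : ℕ}
    (h : ∀ x ∈ s, ∀ y ∈ s, (x - y).natAbs ≤ d) : #s ≤ d + 1 := by
  rcases s.eq_empty_or_nonempty with rfl | hs
  · simp
  have hsub : s ⊆ Icc (s.min' hs) (s.min' hs + d) := fun x hx => by
    have := h x hx _ (s.min'_mem hs)
    have := s.min'_le x hx
    rw [mem_Icc]
    omega
  calc #s ≤ #(Icc (s.min' hs) (s.min' hs + d)) := card_le_card hsub
    _ = d + 1 := by rw [Int.card_Icc]; omega

lemma card_le_of_natAbs_mul_sub_le {a b : ℤ} (ha : a ≠ 0) {M : ℕ} {s : Finset ℤ}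
    (h : ∀ x ∈ s, (a * x - b).natAbs ≤ M) : #s ≤ 2 * M / a.natAbs + 1 := by
  refine card_le_of_natAbs_sub_le fun x hx y hy => ?_
  have hx' := h x hx
  have hy' := h y hy
  rw [Nat.le_div_iff_mul_le (Int.natAbs_pos.2 ha), mul_comm, ← Int.natAbs_mul,
    show a * (x - y) = (a * x - b) - (a * y - b) by ring]
  omega

lemma card_strip_le_of_natAbs_le {u : ℤ × ℤ} (hu : u ≠ 0) (h : u.2.natAbs ≤ u.1.natAbs)
    (P : ℤ × ℤ) (K M : ℕ) :
    #{R ∈ grid K | (cross u (R - P)).natAbs ≤ M} ≤ (2 * M / supNorm u + 1) * K := by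
  have hu1 : u.1 ≠ 0 := fun h1 => hu (Prod.ext h1 (by simp only [Prod.snd_zero]; omega))
  rw [supNorm, max_eq_left h]
  calc #{R ∈ grid K | (cross u (R - P)).natAbs ≤ M}
      ≤ (2 * M / u.1.natAbs + 1) * #(Ico 0 (K : ℤ)) := by
        refine card_le_mul_card_image_of_maps_to (f := Prod.fst) (fun R hR => ?_) _ fun x _ => ?_
        · rw [mem_filter, grid_eq_Ico, mem_product] at hR
          exact hR.1.1
        rw [← card_image_of_injOn (f := Prod.snd) fun R hR R' hR' hRR' => ?_]
        · refine card_le_of_natAbs_mul_sub_le hu1 (b := u.1 * P.2 + u.2 * (x - P.1)) fun y hy => ?_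
          obtain ⟨R, hR, rfl⟩ := mem_image.1 hy
          simp only [mem_filter] at hR
          rw [← hR.2]
          convert hR.1.2 using 2
          simp only [cross, Prod.fst_sub, Prod.snd_sub]
          ring
        · simp only [coe_filter, Set.mem_ofPred_eq] at hR hR'
          exact Prod.ext (hR.2.trans hR'.2.symm) hRR'
    _ = (2 * M / u.1.natAbs + 1) * K := by rw [Int.card_Ico, sub_zero, Int.toNat_natCast]

lemma card_strip_le {u : ℤ × ℤ} (hu : u ≠ 0) (P : ℤ × ℤ) (K M : ℕ) :
    #{R ∈ grid K | (cross u (R - P)).natAbs ≤ M} ≤ (2 * M / supNorm u + 1) * K := by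
  rcases le_total u.2.natAbs u.1.natAbs with h | h
  · exact card_strip_le_of_natAbs_le hu h P K M
  have hswap : #{R ∈ grid K | (cross u (R - P)).natAbs ≤ M} =
      #{R ∈ grid K | (cross u.swap (R - P.swap)).natAbs ≤ M} := by
    refine card_nbij' Prod.swap Prod.swap (fun R hR => ?_) (fun R hR => ?_)
      (fun _ _ => rfl) (fun _ _ => rfl) <;>
    rw [mem_coe, mem_filter] at hR ⊢ <;>
    refine ⟨swap_mem_grid hR.1, ?_⟩
    · rw [← Prod.swap_sub, cross_swap, Int.natAbs_neg]
      exact hR.2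
    · rw [← Prod.swap_swap u, ← Prod.swap_swap P, ← Prod.swap_sub, cross_swap, Int.natAbs_neg]
      exact hR.2
  rw [hswap, ← supNorm_swap]
  exact card_strip_le_of_natAbs_le (by simpa [Prod.swap_eq_iff_eq_swap] using hu) h P.swap K M

lemma supNorm_eq_zero {u : ℤ × ℤ} : supNorm u = 0 ↔ u = 0 := by
  simp [supNorm, Prod.ext_iff]

lemma card_filter_supNorm_sub_eq_le (s : Finset (ℤ × ℤ)) (P : ℤ × ℤ) {t : ℕ} (ht : t ≠ 0) :
    #{Q ∈ s | supNorm (Q - P) = t} ≤ 8 * t := by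
  rw [← Int.card_box ht]
  exact card_le_card_of_injOn (· - P) (fun Q hQ => Int.mem_box.2 (mem_filter.1 hQ).2)
    fun Q _ Q' _ h => sub_left_injective h

lemma sum_erase_div_supNorm_sub_le {K : ℕ} {P : ℤ × ℤ} (hP : P ∈ grid K) (M : ℕ) :
    ∑ Q ∈ (grid K).erase P, (2 * M / supNorm (Q - P) + 1) ≤ K * (16 * M + 8 * K) := by
  have hmaps : ∀ Q ∈ (grid K).erase P, supNorm (Q - P) ∈ Icc 1 K := fun Q hQ => by
    obtain ⟨hQP, hQ⟩ := mem_erase.1 hQ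
    have hlt := supNorm_sub_lt hP hQ
    have hne : supNorm (Q - P) ≠ 0 := supNorm_eq_zero.not.2 (sub_ne_zero.2 hQP)
    rw [mem_Icc]
    omega
  rw [← sum_fiberwise_of_maps_to hmaps]
  calc _ ≤ ∑ _t ∈ Icc 1 K, (16 * M + 8 * K) := sum_le_sum fun t ht => ?_
    _ = K * (16 * M + 8 * K) := by rw [sum_const, Nat.card_Icc, smul_eq_mul, Nat.add_sub_cancel]
  obtain ⟨ht1, htK⟩ := mem_Icc.1 ht
  calc ∑ Q ∈ (grid K).erase P with supNorm (Q - P) = t, (2 * M / supNorm (Q - P) + 1)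
      = #{Q ∈ (grid K).erase P | supNorm (Q - P) = t} * (2 * M / t + 1) := by
        rw [sum_congr rfl fun Q hQ => by rw [(mem_filter.1 hQ).2], sum_const, smul_eq_mul]
    _ ≤ 8 * t * (2 * M / t + 1) :=
        Nat.mul_le_mul_right _ (card_filter_supNorm_sub_eq_le _ P (by omega))
    _ = 8 * (2 * M / t * t) + 8 * t := by ring
    _ ≤ 16 * M + 8 * K := by
        have := Nat.div_mul_le_self (2 * M) t
        omega

def flatTriples (K M : ℕ) : Finset ((ℤ × ℤ) × (ℤ × ℤ) × (ℤ × ℤ)) :=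
  {t ∈ grid K ×ˢ grid K ×ˢ grid K | t.1 ≠ t.2.1 ∧ t.1 ≠ t.2.2 ∧ t.2.1 ≠ t.2.2 ∧
    (cross (t.2.1 - t.1) (t.2.2 - t.1)).natAbs ≤ M}

lemma card_flatTriples_le (K M : ℕ) : #(flatTriples K M) ≤ K ^ 4 * (16 * M + 8 * K) := by
  have hsub : flatTriples K M ⊆ (grid K).biUnion fun P => ((grid K).erase P).biUnion fun Q =>
      {R ∈ grid K | (cross (Q - P) (R - P)).natAbs ≤ M}.image fun R => (P, Q, R) := by
    rintro ⟨P, Q, R⟩ ht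
    simp only [flatTriples, mem_filter, mem_product] at ht
    simp only [mem_biUnion, mem_erase, mem_image, mem_filter]
    exact ⟨P, ht.1.1, Q, ⟨ht.2.1.symm, ht.1.2.1⟩, R, ⟨ht.1.2.2, ht.2.2.2.2⟩, rfl⟩
  calc #(flatTriples K M)
      ≤ ∑ P ∈ grid K, ∑ Q ∈ (grid K).erase P,
          #{R ∈ grid K | (cross (Q - P) (R - P)).natAbs ≤ M} :=
        (card_le_card hsub).trans <| card_biUnion_le.trans <| sum_le_sum fun _ _ =>
          card_biUnion_le.trans <| sum_le_sum fun _ _ => card_image_le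
    _ ≤ ∑ P ∈ grid K, ∑ Q ∈ (grid K).erase P, (2 * M / supNorm (Q - P) + 1) * K :=
        sum_le_sum fun P _ => sum_le_sum fun Q hQ =>
          card_strip_le (sub_ne_zero.2 (ne_of_mem_erase hQ)) P K M
    _ = ∑ P ∈ grid K, (∑ Q ∈ (grid K).erase P, (2 * M / supNorm (Q - P) + 1)) * K := by
        simp_rw [sum_mul]
    _ ≤ ∑ _P ∈ grid K, K * (16 * M + 8 * K) * K :=
        sum_le_sum fun P hP => Nat.mul_le_mul_right _ (sum_erase_div_supNorm_sub_le hP M)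
    _ = K ^ 4 * (16 * M + 8 * K) := by
        rw [sum_const, card_grid, smul_eq_mul]
        ring

lemma card_filter_exists_subset_le {α : Type*} [DecidableEq α] {s : Finset α}
    {F : Finset (Finset α)} {k n : ℕ} (hF : F ⊆ s.powersetCard k) (hkn : k ≤ n) :
    #{S ∈ s.powersetCard n | ∃ T ∈ F, T ⊆ S} ≤ #F * (#s - k).choose (n - k) := by
  have hsub : {S ∈ s.powersetCard n | ∃ T ∈ F, T ⊆ S} ⊆
      F.biUnion fun T => {S ∈ s.powersetCard n | T ⊆ S} := fun S hS => by
    obtain ⟨hS, T, hT, hTS⟩ := mem_filter.1 hS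
    exact mem_biUnion.2 ⟨T, hT, mem_filter.2 ⟨hS, hTS⟩⟩
  calc #{S ∈ s.powersetCard n | ∃ T ∈ F, T ⊆ S}
      ≤ ∑ T ∈ F, #{S ∈ s.powersetCard n | T ⊆ S} := (card_le_card hsub).trans card_biUnion_le
    _ = ∑ _T ∈ F, (#s - k).choose (n - k) := sum_congr rfl fun T hT => by
        obtain ⟨hTs, hTk⟩ := mem_powersetCard.1 (hF hT)
        rw [card_filter_powersetCard_subset T s n hTs (hTk ▸ hkn), hTk]
    _ = #F * (#s - k).choose (n - k) := by rw [sum_const, smul_eq_mul]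

lemma mul_choose_sub_three_le {N n B d : ℕ} (hN : 3 ≤ N) (hn : 3 ≤ n)
    (hB : B * d * n ^ 3 ≤ (N - 2) ^ 3) : B * (N - 3).choose (n - 3) * d ≤ N.choose n := by
  have hchoose : N.choose n * n.descFactorial 3 = N.descFactorial 3 * (N - 3).choose (n - 3) := by
    simp only [Nat.descFactorial_eq_factorial_mul_choose]
    rw [mul_left_comm, Nat.choose_mul hn, mul_assoc]
  refine Nat.le_of_mul_le_mul_right ?_ (Nat.descFactorial_pos.2 hN)
  calc B * (N - 3).choose (n - 3) * d * N.descFactorial 3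
      = B * d * (N.choose n * n.descFactorial 3) := by rw [hchoose]; ring
    _ ≤ B * d * (N.choose n * n ^ 3) := by gcongr; exact Nat.descFactorial_le_pow n 3
    _ = N.choose n * (B * d * n ^ 3) := by ring
    _ ≤ N.choose n * (N + 1 - 3) ^ 3 := by rw [show N + 1 - 3 = N - 2 by omega]; gcongr
    _ ≤ N.choose n * N.descFactorial 3 := by gcongr; exact Nat.pow_sub_le_descFactorial N 3

lemma pow_four_mul_le_sub_two_pow_three {K M D : ℕ} (hK : 128 * D ≤ K)
    (hM : 256 * D * M ≤ K ^ 2) : K ^ 4 * (16 * M + 8 * K) * D ≤ (K ^ 2 - 2) ^ 3 := by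
  rcases Nat.eq_zero_or_pos D with rfl | hD
  · simp
  have hK2 : 4 ≤ K ^ 2 := by nlinarith
  have hsmall : 128 * M * D + 64 * K * D ≤ K ^ 2 := by nlinarith [Nat.mul_le_mul_right K hK]
  refine Nat.le_of_mul_le_mul_left ?_ (by norm_num : 0 < 8)
  calc 8 * (K ^ 4 * (16 * M + 8 * K) * D) = K ^ 4 * (128 * M * D + 64 * K * D) := by ring
    _ ≤ K ^ 4 * K ^ 2 := by gcongr
    _ = (K ^ 2) ^ 3 := by ring
    _ ≤ (2 * (K ^ 2 - 2)) ^ 3 := by gcongr; omega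
    _ = 8 * (K ^ 2 - 2) ^ 3 := by ring

lemma exists_triArea_lt_of_gridMinArea_lt {K : ℕ} {S : Finset (ℤ × ℤ)} {ε : ℝ} (hS : 3 ≤ #S)
    (h : gridMinArea K S < ε) :
    ∃ P ∈ S, ∃ Q ∈ S, ∃ R ∈ S, P ≠ Q ∧ P ≠ R ∧ Q ≠ R ∧
      triArea (scale K P) (scale K Q) (scale K R) < ε := by
  obtain ⟨P, Q, R, hP, hQ, hR, hPQ, hPR, hQR⟩ := two_lt_card_iff.1 hS
  obtain ⟨_, ⟨P, hP, Q, hQ, R, hR, hPQ, hPR, hQR, rfl⟩, hlt⟩ :=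
    exists_lt_of_csInf_lt (by exact ⟨_, P, hP, Q, hQ, R, hR, hPQ, hPR, hQR, rfl⟩) h
  exact ⟨P, hP, Q, hQ, R, hR, hPQ, hPR, hQR, hlt⟩

lemma natAbs_cross_le_of_triArea_lt {K D : ℕ} (hK : 2 ≤ K) (hD : 0 < D) {P Q R : ℤ × ℤ}
    (h : triArea (scale K P) (scale K Q) (scale K R) < 1 / 512 / D) :
    (cross (Q - P) (R - P)).natAbs ≤ K ^ 2 / (256 * D) := by
  have hK' : (2 : ℝ) ≤ K := by exact_mod_cast hK
  have hD' : (0 : ℝ) < D := by exact_mod_cast hD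
  rw [triArea_scale, div_lt_div_iff₀ (by nlinarith) hD'] at h
  rw [Nat.le_div_iff_mul_le (by positivity)]
  suffices ((cross (Q - P) (R - P)).natAbs * (256 * D) : ℝ) ≤ (K ^ 2 : ℕ) by exact_mod_cast this
  rw [Nat.cast_natAbs, Int.cast_abs]
  push_cast
  nlinarith

def flatTriangles (K M : ℕ) : Finset (Finset (ℤ × ℤ)) :=
  (flatTriples K M).image fun t => {t.1, t.2.1, t.2.2}

lemma flatTriangles_subset_powersetCard (K M : ℕ) :
    flatTriangles K M ⊆ (grid K).powersetCard 3 := fun T hT => by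
  obtain ⟨⟨P, Q, R⟩, ht, rfl⟩ := mem_image.1 hT
  simp only [flatTriples, mem_filter, mem_product] at ht
  refine mem_powersetCard.2 ⟨?_, card_eq_three.2 ⟨P, Q, R, ht.2.1, ht.2.2.1, ht.2.2.2.1, rfl⟩⟩
  simp only [insert_subset_iff, singleton_subset_iff]
  exact ht.1

lemma card_flatTriangles_le (K M : ℕ) : #(flatTriangles K M) ≤ K ^ 4 * (16 * M + 8 * K) :=
  card_image_le.trans (card_flatTriples_le K M)

lemma exists_flatTriangle_subset_of_gridMinArea_lt {K n D : ℕ} (hK : 2 ≤ K) (hD : 0 < D)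
    (hn : 3 ≤ n) {S : Finset (ℤ × ℤ)} (hS : S ∈ (grid K).powersetCard n)
    (h : gridMinArea K S < 1 / 512 / D) : ∃ T ∈ flatTriangles K (K ^ 2 / (256 * D)), T ⊆ S := by
  obtain ⟨hSK, hSn⟩ := mem_powersetCard.1 hS
  obtain ⟨P, hP, Q, hQ, R, hR, hPQ, hPR, hQR, harea⟩ :=
    exists_triArea_lt_of_gridMinArea_lt (hSn ▸ hn) h
  refine ⟨{P, Q, R}, mem_image.2 ⟨(P, Q, R), ?_, rfl⟩, ?_⟩
  · simp only [flatTriples, mem_filter, mem_product]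
    exact ⟨⟨hSK hP, hSK hQ, hSK hR⟩, hPQ, hPR, hQR, natAbs_cross_le_of_triArea_lt hK hD harea⟩
  · simp only [insert_subset_iff, singleton_subset_iff]
    exact ⟨hP, hQ, hR⟩

open Classical in
theorem count_small_min_area_subsets_le :
    ∃ c₁ : ℝ, 0 < c₁ ∧ ∀ δ : ℕ, 0 < δ → ∃ N : ℕ, ∀ n : ℕ, N ≤ n →
      ∃ K₀ : ℕ, ∀ K : ℕ, K₀ ≤ K →
        (((((grid K).powersetCard n).filter fun S =>
            gridMinArea K S < c₁ / (2 ^ δ * (n : ℝ) ^ 3)).card : ℝ))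
          ≤ ((K ^ 2).choose n : ℝ) / 2 ^ δ := by
  refine ⟨1 / 512, by norm_num, fun δ _ => ⟨3, fun n hn => ⟨128 * (2 ^ δ * n ^ 3), fun K hK => ?_⟩⟩⟩
  have hD : 0 < 2 ^ δ * n ^ 3 := by positivity
  have hK2 : 2 ≤ K := by nlinarith
  set M := K ^ 2 / (256 * (2 ^ δ * n ^ 3))
  have hflat : {S ∈ (grid K).powersetCard n | gridMinArea K S < 1 / 512 / (2 ^ δ * (n : ℝ) ^ 3)}
      ⊆ {S ∈ (grid K).powersetCard n | ∃ T ∈ flatTriangles K M, T ⊆ S} := fun S hS => by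
    obtain ⟨hS, hlt⟩ := mem_filter.1 hS
    exact mem_filter.2 ⟨hS, exists_flatTriangle_subset_of_gridMinArea_lt hK2 hD hn hS
      (by exact_mod_cast hlt)⟩
  have hcount := (card_le_card hflat).trans <|
    card_filter_exists_subset_le (flatTriangles_subset_powersetCard K M) hn
  rw [card_grid] at hcount
  have hchoose := mul_choose_sub_three_le (N := K ^ 2) (by nlinarith) hn <| by
    rw [mul_assoc]
    exact (Nat.mul_le_mul_right _ (card_flatTriangles_le K M)).trans
      (pow_four_mul_le_sub_two_pow_three hK (Nat.mul_div_le _ _))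
  rw [le_div_iff₀ (by positivity)]
  exact_mod_cast (Nat.mul_le_mul_right _ hcount).trans hchoose
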